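/- For the quadratic cost c(x,y) = ½‖x−y‖², the gradient of u ↦ f(φ, u) at a point u ∈ A_σ(φ) equals (1/n)(∑ᵢ PᵢᵀPᵢ u − ∑ᵢ Pᵢᵀ y_{σ(i)}), where σ(i) is the index attaining min_j (½‖Pᵢu − yⱼ‖² − φⱼ). -/

import Mathlib

/-!
The strict inequalities defining `A_σ(φ)` persist near `u` by continuity, so there each
`min_j` is attained at `σ i` and `f(φ, ·)` agrees with the smooth function
`v ↦ (1/n) ∑ᵢ (½‖Pᵢv − y_{σ(i)}‖² − φ_{σ(i)}) + const`, whose gradient is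
`(1/n) ∑ᵢ Pᵢᵀ(Pᵢu − y_{σ(i)})`.
-/

open Finset Filter Topology InnerProductSpace

section Gradient

variable {F : Type*} [NormedAddCommGroup F] [InnerProductSpace ℝ F] [CompleteSpace F]
  {f : F → ℝ} {f' x : F}

theorem HasGradientAt.add_const (h : HasGradientAt f f' x) (c : ℝ) :
    HasGradientAt (fun v => f v + c) f' x := by
  rw [hasGradientAt_iff_hasFDerivAt] at h ⊢
  exact h.add_const c

theorem HasGradientAt.sub_const (h : HasGradientAt f f' x) (c : ℝ) :
    HasGradientAt (fun v => f v - c) f' x := by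
  rw [hasGradientAt_iff_hasFDerivAt] at h ⊢
  exact h.sub_const c

theorem HasGradientAt.const_mul (h : HasGradientAt f f' x) (c : ℝ) :
    HasGradientAt (fun v => c * f v) (c • f') x := by
  rw [hasGradientAt_iff_hasFDerivAt, map_smul]
  exact (hasGradientAt_iff_hasFDerivAt.1 h).const_mul c

theorem HasGradientAt.sum {ι : Type*} (s : Finset ι) {f : ι → F → ℝ} {f' : ι → F}
    (h : ∀ i ∈ s, HasGradientAt (f i) (f' i) x) :
    HasGradientAt (fun v => ∑ i ∈ s, f i v) (∑ i ∈ s, f' i) x := by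
  rw [hasGradientAt_iff_hasFDerivAt, map_sum]
  exact HasFDerivAt.fun_sum fun i hi => hasGradientAt_iff_hasFDerivAt.1 (h i hi)

end Gradient

theorem hasGradientAt_half_norm_sq_sub {E F : Type*}
    [NormedAddCommGroup E] [InnerProductSpace ℝ E] [FiniteDimensional ℝ E]
    [NormedAddCommGroup F] [InnerProductSpace ℝ F] [FiniteDimensional ℝ F]
    (A : E →ₗ[ℝ] F) (b : F) (u : E) :
    HasGradientAt (fun v => (1 / 2 : ℝ) * ‖A v - b‖ ^ 2) (LinearMap.adjoint A (A u - b)) u := by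
  have hA : HasFDerivAt (fun v => A v - b) (LinearMap.toContinuousLinearMap A) u :=
    (LinearMap.toContinuousLinearMap A).hasFDerivAt.sub_const b
  rw [hasGradientAt_iff_hasFDerivAt]
  convert (hA.inner ℝ hA).const_mul (1 / 2 : ℝ) using 2 with v
  · rfl
  · rw [real_inner_self_eq_norm_sq]
  · ext w
    simp only [map_sub, sub_apply, toDual_apply_apply, LinearMap.adjoint_inner_left,
      real_inner_comm (A w), one_div, smul_apply, ContinuousLinearMap.comp_apply,
      ContinuousLinearMap.prod_apply, LinearMap.coe_toContinuousLinearMap', fderivInnerCLM_apply,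
      inner_sub_right, smul_eq_mul]
    ring

theorem Finset.inf'_eventuallyEq_of_forall_lt {X ι α : Type*} [TopologicalSpace X]
    [LinearOrder α] [TopologicalSpace α] [OrderClosedTopology α]
    {s : Finset ι} (hs : s.Nonempty) {g : ι → X → α} {x : X} {k : ι} (hk : k ∈ s)
    (hg : ∀ i ∈ s, ContinuousAt (g i) x) (hmin : ∀ i ∈ s, i ≠ k → g k x < g i x) :
    (fun v => s.inf' hs (g · v)) =ᶠ[𝓝 x] g k := by
  have hmin_near : ∀ᶠ v in 𝓝 x, ∀ i ∈ s, i ≠ k → g k v < g i v := by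
    refine (eventually_all_finset s).2 fun i hi => ?_
    by_cases hik : i = k
    · exact Eventually.of_forall fun _ h => absurd hik h
    · exact ((hg k hk).eventually_lt (hg i hi) (hmin i hi hik)).mono fun _ h _ => h
  filter_upwards [hmin_near] with v hv
  refine le_antisymm (inf'_le _ hk) (le_inf' _ _ fun i hi => ?_)
  obtain rfl | hik := eq_or_ne i k
  · exact le_rfl
  · exact (hv i hi hik).le

/-- For the quadratic cost `c(x,y) = ½‖x−y‖²`, the gradient of `u ↦ f(φ,u)` at a
point `u ∈ A_σ(φ)` (where `σ(i)` is the unique minimizer of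
`j ↦ ½‖Pᵢu − yⱼ‖² − φⱼ`) equals `(1/n)(∑ᵢ PᵢᵀPᵢu − ∑ᵢ Pᵢᵀ y_{σ(i)})`. -/
theorem gradient_f_quadratic
    {N n p m : ℕ} [NeZero m]
    (P : Fin n → EuclideanSpace ℝ (Fin N) →ₗ[ℝ] EuclideanSpace ℝ (Fin p))
    (y : Fin m → EuclideanSpace ℝ (Fin p))
    (φ : Fin m → ℝ) (σ : Fin n → Fin m)
    (u : EuclideanSpace ℝ (Fin N))
    (hu : ∀ i, ∀ k, k ≠ σ i →
      (1/2) * ‖P i u - y (σ i)‖^2 - φ (σ i) < (1/2) * ‖P i u - y k‖^2 - φ k) :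
    HasGradientAt
      (fun v : EuclideanSpace ℝ (Fin N) =>
        (1 / n) * (∑ i,
          Finset.univ.inf' Finset.univ_nonempty fun j => (1/2) * ‖P i v - y j‖^2 - φ j)
          + (1 / m) * ∑ j, φ j)
      ((1 / (n : ℝ)) •
        (∑ i, (LinearMap.adjoint (P i)) (P i u) - ∑ i, (LinearMap.adjoint (P i)) (y (σ i))))
      u := by
  have hcost : ∀ i j, HasGradientAt (fun v => (1 / 2 : ℝ) * ‖P i v - y j‖ ^ 2 - φ j)
      (LinearMap.adjoint (P i) (P i u - y j)) u := fun i j =>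
    (hasGradientAt_half_norm_sq_sub (P i) (y j) u).sub_const (φ j)
  have hactive : ∀ᶠ v in 𝓝 u, ∀ i, (univ.inf' univ_nonempty fun j =>
      (1 / 2 : ℝ) * ‖P i v - y j‖ ^ 2 - φ j) = (1 / 2) * ‖P i v - y (σ i)‖ ^ 2 - φ (σ i) :=
    eventually_all.2 fun i => inf'_eventuallyEq_of_forall_lt univ_nonempty (mem_univ _)
      (fun j _ => (hcost i j).continuousAt) fun j _ => hu i j
  have hgrad := ((HasGradientAt.sum univ fun i _ => hcost i (σ i)).const_mul
    (1 / (n : ℝ))).add_const ((1 / (m : ℝ)) * ∑ j, φ j)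
  rw [show ∑ i, LinearMap.adjoint (P i) (P i u) - ∑ i, LinearMap.adjoint (P i) (y (σ i)) =
      ∑ i, LinearMap.adjoint (P i) (P i u - y (σ i)) by simp only [map_sub, sum_sub_distrib]]
  exact hgrad.congr_of_eventuallyEq (hactive.mono fun v hv => by simp only [hv])
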